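/- Fix $s \in [\tfrac{1}{2}, \tfrac{2}{3}]$ and $\varepsilon \in (0, \tfrac{1}{100})$. For a nonzero integer $n$ and a real $L \geq 1$, define $w_Z(n, L) := L^{1/2 + \varepsilon}$ if $L < |n|$ and $w_Z(n, L) := L^{2/3 + \varepsilon}$ if $L \geq |n|$; and define $w_X(n, L) := \langle n\rangle^{2s - 1 + \varepsilon}\, L^{-1/2 + \varepsilon}$ if $L < |n|$ and $w_X(n, L) := L^{-1/3 + \varepsilon}$ if $L \geq |n|$. Then there exists a constant $C > 0$ such that for every nonzero integer $n$ and all reals $L_1, L_2, A \geq 1$: (i) if $L_1 \geq L_2$ then $\langle n\rangle^{2s-1} \leq C\, w_Z(n, L_1)\, w_X(n, L_2)$; and (ii) if $L_2 \geq L_1$ and $A \geq L_2/2$ then $\langle n\rangle^{2s-1} \leq C\, A\, w_X(n, L_2)$. -/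

import Mathlib

noncomputable def jb (m : ℤ) : ℝ := Real.sqrt (1 + (m : ℝ) ^ 2)

/-!
Write `α = 2s - 1 ≤ 1/3`. Below the threshold `L₂ < |n|` the factor `⟨n⟩^(α + ε)` is part of
`w_X`, and the modulation powers combine to `L₂^(1/2 + ε) L₂^(-1/2 + ε) ≥ 1`. At or above it,
`⟨n⟩^α ≤ 2 |n|^(1/3) ≤ 2 L₂^(1/3)`, which is beaten by `L₁^(2/3 + ε) L₂^(-1/3 + ε) ≥ L₂^(1/3)`.
Part (ii) is part (i) with `L₁ = L₂`, since `w_Z(n, L) ≤ L ≤ 2A`.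
-/

open Real

noncomputable def weightZ (ε : ℝ) (n : ℤ) (L : ℝ) : ℝ :=
  if L < |(n : ℝ)| then L ^ (1/2 + ε) else L ^ (2/3 + ε)

noncomputable def weightX (s ε : ℝ) (n : ℤ) (L : ℝ) : ℝ :=
  if L < |(n : ℝ)| then jb n ^ (2*s - 1 + ε) * L ^ (-(1:ℝ)/2 + ε) else L ^ (-(1:ℝ)/3 + ε)

lemma one_le_jb (n : ℤ) : 1 ≤ jb n :=
  one_le_sqrt.mpr (by nlinarith [sq_nonneg (n : ℝ)])

lemma jb_le_one_add_abs (n : ℤ) : jb n ≤ 1 + |(n : ℝ)| :=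
  sqrt_le_iff.mpr ⟨by positivity, by nlinarith [abs_nonneg (n : ℝ), sq_abs (n : ℝ)]⟩

lemma jb_rpow_le_of_abs_le {n : ℤ} {α L : ℝ} (hα : α ≤ 1/3) (hL : 1 ≤ L)
    (hn : |(n : ℝ)| ≤ L) : jb n ^ α ≤ 2 * L ^ (1/3 : ℝ) :=
  calc jb n ^ α ≤ jb n ^ (1/3 : ℝ) := rpow_le_rpow_of_exponent_le (one_le_jb n) hα
    _ ≤ (2 * L) ^ (1/3 : ℝ) :=
        rpow_le_rpow (by linarith [one_le_jb n]) (by linarith [jb_le_one_add_abs n]) (by norm_num)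
    _ = 2 ^ (1/3 : ℝ) * L ^ (1/3 : ℝ) := mul_rpow (by norm_num) (by linarith)
    _ ≤ 2 * L ^ (1/3 : ℝ) := by
        gcongr
        exact rpow_le_self_of_one_le (by norm_num) (by norm_num)

section Weights

variable {s ε L : ℝ} {n : ℤ}

lemma rpow_le_weightZ (hL : 1 ≤ L) : L ^ (1/2 + ε) ≤ weightZ ε n L := by
  unfold weightZ
  split_ifs
  · rfl
  · exact rpow_le_rpow_of_exponent_le hL (by linarith)

lemma weightZ_nonneg (hL : 1 ≤ L) : 0 ≤ weightZ ε n L :=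
  (rpow_nonneg (by linarith) _).trans (rpow_le_weightZ hL)

lemma weightZ_le_self (hε : ε ≤ 1/3) (hL : 1 ≤ L) : weightZ ε n L ≤ L := by
  unfold weightZ
  split_ifs <;> exact rpow_le_self_of_one_le hL (by linarith)

lemma weightX_nonneg (hL : 1 ≤ L) : 0 ≤ weightX s ε n L := by
  have hjb : 0 ≤ jb n := zero_le_one.trans (one_le_jb n)
  unfold weightX
  split_ifs <;> positivity

end Weights

lemma jb_rpow_le_two_mul_weightZ_mul_weightX {s ε L₁ L₂ : ℝ} (n : ℤ) (hs : s ≤ 2/3)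
    (hε : 0 ≤ ε) (hL₂ : 1 ≤ L₂) (h12 : L₂ ≤ L₁) :
    jb n ^ (2*s - 1) ≤ 2 * weightZ ε n L₁ * weightX s ε n L₂ := by
  have hL₂0 : 0 < L₂ := by linarith
  by_cases hn : L₂ < |(n : ℝ)|
  · have hZ : L₂ ^ (1/2 + ε) ≤ weightZ ε n L₁ :=
      (rpow_le_rpow hL₂0.le h12 (by linarith)).trans (rpow_le_weightZ (hL₂.trans h12))
    have hgain : 1 ≤ L₂ ^ (1/2 + ε) * L₂ ^ (-(1:ℝ)/2 + ε) := by
      rw [← rpow_add hL₂0]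
      exact one_le_rpow hL₂ (by linarith)
    have hjb : 0 < jb n := zero_lt_one.trans_le (one_le_jb n)
    have hpos : 0 < weightZ ε n L₁ * weightX s ε n L₂ := by
      rw [weightX, if_pos hn]
      exact mul_pos ((rpow_pos_of_pos hL₂0 _).trans_le hZ) (by positivity)
    calc jb n ^ (2*s - 1) ≤ jb n ^ (2*s - 1 + ε) :=
          rpow_le_rpow_of_exponent_le (one_le_jb n) (by linarith)
      _ ≤ jb n ^ (2*s - 1 + ε) * (L₂ ^ (1/2 + ε) * L₂ ^ (-(1:ℝ)/2 + ε)) :=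
          le_mul_of_one_le_right (by positivity) hgain
      _ ≤ jb n ^ (2*s - 1 + ε) * (weightZ ε n L₁ * L₂ ^ (-(1:ℝ)/2 + ε)) := by gcongr
      _ = weightZ ε n L₁ * weightX s ε n L₂ := by rw [weightX, if_pos hn]; ring
      _ ≤ 2 * weightZ ε n L₁ * weightX s ε n L₂ := by linarith
  · rw [not_lt] at hn
    rw [weightZ, if_neg (by linarith), weightX, if_neg (by linarith)]
    calc jb n ^ (2*s - 1) ≤ 2 * L₂ ^ (1/3 : ℝ) := jb_rpow_le_of_abs_le (by linarith) hL₂ hn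
      _ ≤ 2 * (L₂ ^ (2/3 + ε) * L₂ ^ (-(1:ℝ)/3 + ε)) := by
          rw [← rpow_add hL₂0]
          gcongr
          linarith
      _ ≤ 2 * L₁ ^ (2/3 + ε) * L₂ ^ (-(1:ℝ)/3 + ε) := by
          rw [← mul_assoc]
          gcongr

lemma jb_rpow_le_four_mul_weightX {s ε L₂ A : ℝ} (n : ℤ) (hs : s ≤ 2/3) (hε : 0 ≤ ε)
    (hε' : ε ≤ 1/3) (hL₂ : 1 ≤ L₂) (hA : L₂ / 2 ≤ A) :
    jb n ^ (2*s - 1) ≤ 4 * A * weightX s ε n L₂ :=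
  calc jb n ^ (2*s - 1) ≤ 2 * weightZ ε n L₂ * weightX s ε n L₂ :=
        jb_rpow_le_two_mul_weightZ_mul_weightX n hs hε hL₂ le_rfl
    _ ≤ 4 * A * weightX s ε n L₂ :=
        mul_le_mul_of_nonneg_right (by linarith [weightZ_le_self (n := n) hε' hL₂])
          (weightX_nonneg hL₂)

theorem stmt_19_general (s ε : ℝ) (hs' : s ≤ 2/3) (hε : 0 < ε) (hε' : ε < 1/100)
    (wZ wX : ℤ → ℝ → ℝ)
    (hwZ : ∀ (n : ℤ) (L : ℝ), 1 ≤ L →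
      wZ n L = if L < |(n : ℝ)| then L ^ (1/2 + ε) else L ^ (2/3 + ε))
    (hwX : ∀ (n : ℤ) (L : ℝ), 1 ≤ L →
      wX n L = if L < |(n : ℝ)| then jb n ^ (2*s - 1 + ε) * L ^ (-(1:ℝ)/2 + ε)
               else L ^ (-(1:ℝ)/3 + ε)) :
    ∃ C : ℝ, 0 < C ∧ ∀ n : ℤ, n ≠ 0 → ∀ L₁ L₂ A : ℝ, 1 ≤ L₁ → 1 ≤ L₂ → 1 ≤ A →
      (L₂ ≤ L₁ → jb n ^ (2*s - 1) ≤ C * wZ n L₁ * wX n L₂) ∧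
      (L₁ ≤ L₂ → L₂ / 2 ≤ A → jb n ^ (2*s - 1) ≤ C * A * wX n L₂) := by
  refine ⟨4, by norm_num, fun n _ L₁ L₂ A hL₁ hL₂ _ => ⟨fun h12 => ?_, fun _ hA => ?_⟩⟩
  · rw [hwZ n L₁ hL₁, hwX n L₂ hL₂]
    calc jb n ^ (2*s - 1) ≤ 2 * weightZ ε n L₁ * weightX s ε n L₂ :=
          jb_rpow_le_two_mul_weightZ_mul_weightX n hs' hε.le hL₂ h12
      _ ≤ 4 * weightZ ε n L₁ * weightX s ε n L₂ := by
          have := weightZ_nonneg (ε := ε) (n := n) hL₁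
          have := weightX_nonneg (s := s) (ε := ε) (n := n) hL₂
          gcongr
          norm_num
  · rw [hwX n L₂ hL₂]
    exact jb_rpow_le_four_mul_weightX n hs' hε.le (by linarith) hL₂ hA

theorem stmt_19 (s ε : ℝ) (hs : 1/2 ≤ s) (hs' : s ≤ 2/3) (hε : 0 < ε) (hε' : ε < 1/100)
    (wZ wX : ℤ → ℝ → ℝ)
    (hwZ : ∀ (n : ℤ) (L : ℝ), 1 ≤ L →
      wZ n L = if L < |(n : ℝ)| then L ^ (1/2 + ε) else L ^ (2/3 + ε))
    (hwX : ∀ (n : ℤ) (L : ℝ), 1 ≤ L →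
      wX n L = if L < |(n : ℝ)| then jb n ^ (2*s - 1 + ε) * L ^ (-(1:ℝ)/2 + ε)
               else L ^ (-(1:ℝ)/3 + ε)) :
    ∃ C : ℝ, 0 < C ∧ ∀ n : ℤ, n ≠ 0 → ∀ L₁ L₂ A : ℝ, 1 ≤ L₁ → 1 ≤ L₂ → 1 ≤ A →
      (L₂ ≤ L₁ → jb n ^ (2*s - 1) ≤ C * wZ n L₁ * wX n L₂) ∧
      (L₁ ≤ L₂ → L₂ / 2 ≤ A → jb n ^ (2*s - 1) ≤ C * A * wX n L₂) :=
  stmt_19_general s ε hs' hε hε' wZ wX hwZ hwX
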